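/- arXiv:2511.12608 — 2 statements merged into one kernel-verified Lean document; each statement's English description precedes it below -/
import Mathlib

section
/- Let G be a finite simple graph with vertex set V. Then the combinatorial Alexander dual of the independence complex of the neighborhood hypergraph of G coincides with the closed neighborhood complex of the complement graph: for every subset σ of V, the complement V ∖ σ is not an independent set of the neighborhood hypergraph N_G if and only if σ is contained in the closed neighborhood N_{Ḡ}[v] of some vertex v in the complement graph Ḡ. In symbols, I(N_G)^∨ = N[Ḡ]. -/
/-- The closed neighborhood `N_G[v] = {v} ∪ N_G(v)` of a vertex in a simple graph. -/
def closedNbhd {V : Type*} (G : SimpleGraph V) (v : V) : Set V :=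
  insert v (G.neighborSet v)

/-- The closed neighborhood complex `N[G]`: the family of finite vertex sets contained in
the closed neighborhood of some vertex. -/
def closedNbhdComplex {V : Type*} (G : SimpleGraph V) : Set (Set V) :=
  {σ : Set V | σ.Finite ∧ ∃ v : V, σ ⊆ closedNbhd G v}

/-- The independence complex of the neighborhood hypergraph `N_G` of `G`: the family of
vertex sets containing no open neighborhood `N_G(u)`. -/
def indepNbhdHypergraph {V : Type*} (G : SimpleGraph V) : Set (Set V) :=
  {τ : Set V | ∀ u : V, ¬ G.neighborSet u ⊆ τ}

/-- For a finite simple graph `G` with vertex set `V`: a subset `σ ⊆ V` satisfies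
"`V ∖ σ` is not independent in the neighborhood hypergraph `N_G`" iff `σ` is contained in
the closed neighborhood (in the complement graph `Ḡ`) of some vertex.  In symbols,
`I(N_G)^∨ = N[Ḡ]`. -/
theorem alexanderDual_indep_nbhdHypergraph {V : Type*} [Fintype V] (G : SimpleGraph V) :
    (∀ σ : Set V,
      (Set.univ \ σ) ∉ indepNbhdHypergraph G ↔ ∃ v : V, σ ⊆ closedNbhd Gᶜ v) ∧
    {σ : Set V | (Set.univ \ σ) ∉ indepNbhdHypergraph G} = closedNbhdComplex Gᶜ := by

  have key : ∀ σ : Set V,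
      (Set.univ \ σ) ∉ indepNbhdHypergraph G ↔ ∃ v : V, σ ⊆ closedNbhd Gᶜ v := by
    intro σ
    simp only [indepNbhdHypergraph, Set.mem_setOf_eq, not_forall, not_not]
    constructor
    · rintro ⟨u, hu⟩
      refine ⟨u, fun w hw => ?_⟩
      by_cases h : w = u
      · exact h ▸ Set.mem_insert _ _
      · refine Set.mem_insert_of_mem _ ?_
        simp only [SimpleGraph.neighborSet, SimpleGraph.compl_adj, Set.mem_setOf_eq]
        refine ⟨fun he => h he.symm, fun hadj => ?_⟩
        exact (hu hadj).2 hw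
    · rintro ⟨u, hu⟩
      refine ⟨u, fun w hw => ⟨Set.mem_univ _, fun hws => ?_⟩⟩
      rcases hu hws with h | h
      · exact G.loopless.irrefl u (h ▸ hw)
      · exact h.2 hw
  refine ⟨key, ?_⟩
  ext σ
  simp only [Set.mem_setOf_eq, key, closedNbhdComplex]
  exact ⟨fun h => ⟨Set.toFinite σ, h⟩, fun h => h.2⟩
end

section
/- Let G be a simple graph, v a vertex of G, and k ≥ 1 an integer. Then the edge-path group E(N^k[G], v) of the closed k-neighborhood complex of G based at v is isomorphic to the closed 2k-fundamental group π₁^{2k}[G,v]. (Via the standard identification of the fundamental group of the geometric realization of a simplicial complex with its edge-path group, this is the isomorphism π₁(N^k[G], v) ≅ π₁^{2k}[G,v].) -/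
/-- A path of length `len` in a simple graph `G` from `v` to `w`: a function on `{0,…,len}`
(encoded as a function `ℕ → V` that is constantly `w` from index `len` on) whose consecutive
values are adjacent or equal. -/
structure GPath {V : Type*} (G : SimpleGraph V) (v w : V) where
  len : ℕ
  toFun : ℕ → V
  source : toFun 0 = v
  target : toFun len = w
  step : ∀ i < len, G.Adj (toFun i) (toFun (i + 1)) ∨ toFun i = toFun (i + 1)
  junk : ∀ i, len ≤ i → toFun i = w

namespace GPath

variable {V : Type*} {G : SimpleGraph V}

/-- The constant path of length 0 at a vertex. -/
def refl (G : SimpleGraph V) (v : V) : GPath G v v where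
  len := 0
  toFun := fun _ => v
  source := rfl
  target := rfl
  step := fun i hi => absurd hi (Nat.not_lt_zero i)
  junk := fun _ _ => rfl

/-- Concatenation of composable paths. -/
def concat {u v w : V} (γ : GPath G u v) (δ : GPath G v w) : GPath G u w where
  len := γ.len + δ.len
  toFun := fun i => if i < γ.len then γ.toFun i else δ.toFun (i - γ.len)
  source := by
    by_cases h : 0 < γ.len
    · simpa [h] using γ.source
    · have h0 : γ.len = 0 := by omega
      have huv : u = v := by
        have h1 := γ.source; have h2 := γ.target
        rw [h0] at h2; rw [h1] at h2; exact h2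
      show (if 0 < γ.len then γ.toFun 0 else δ.toFun (0 - γ.len)) = u
      rw [if_neg h, Nat.zero_sub, δ.source]
      exact huv.symm
  target := by
    have h : ¬ γ.len + δ.len < γ.len := by omega
    have h2 : γ.len + δ.len - γ.len = δ.len := by omega
    simp only [h, if_false, h2, δ.target]
  step := by
    intro i hi
    by_cases h1 : i + 1 < γ.len
    · have h0 : i < γ.len := by omega
      simpa [h0, h1] using γ.step i h0
    · by_cases h0 : i < γ.len
      · -- i + 1 = γ.len
        have he : i + 1 = γ.len := by omega
        have h3 : i + 1 - γ.len = 0 := by omega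
        have hval : δ.toFun (i + 1 - γ.len) = γ.toFun (i + 1) := by
          rw [h3, δ.source, he, γ.target]
        simp only [h0, if_true, h1, if_false, hval]
        exact γ.step i h0
      · have h3 : i + 1 - γ.len = (i - γ.len) + 1 := by omega
        simp only [h0, if_false, h1, if_false, h3]
        exact δ.step (i - γ.len) (by omega)
  junk := by
    intro i hi
    have h : ¬ i < γ.len := by omega
    simp only [h, if_false]
    exact δ.junk _ (by omega)

/-- The reverse of a path: `γ̄(i) = γ(len − i)`. -/
def reverse {v w : V} (γ : GPath G v w) : GPath G w v where
  len := γ.len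
  toFun := fun i => γ.toFun (γ.len - i)
  source := by simpa using γ.target
  target := by simpa using γ.source
  step := by
    intro i hi
    show G.Adj (γ.toFun (γ.len - i)) (γ.toFun (γ.len - (i + 1))) ∨
      γ.toFun (γ.len - i) = γ.toFun (γ.len - (i + 1))
    have h1 : γ.len - i = (γ.len - (i + 1)) + 1 := by omega
    rcases γ.step (γ.len - (i + 1)) (by omega) with h | h
    · exact Or.inl (by rw [h1]; exact h.symm)
    · exact Or.inr (by rw [h1, ← h])
  junk := by
    intro i hi
    show γ.toFun (γ.len - i) = v
    have h : γ.len - i = 0 := by omega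
    rw [h, γ.source]

end GPath

/-- Relation (A): `γ'` has length `l(γ) + 1` and agrees with `γ` up to an index `x` and,
shifted by one, from `x` on. -/
def RelA {V : Type*} {G : SimpleGraph V} {v w : V} (γ γ' : GPath G v w) : Prop :=
  γ'.len = γ.len + 1 ∧ ∃ x ≤ γ.len,
    (∀ i ≤ x, γ.toFun i = γ'.toFun i) ∧ (∀ i, x ≤ i → γ.toFun i = γ'.toFun (i + 1))

/-- Relation (B)_k: `γ` and `γ'` have equal length and agree up to some index `i₀` and from
`i₀ + k` on. -/
def RelB {V : Type*} (k : ℕ) {G : SimpleGraph V} {v w : V} (γ γ' : GPath G v w) : Prop :=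
  γ.len = γ'.len ∧ ∃ i₀ ≤ γ.len,
    (∀ i ≤ i₀, γ.toFun i = γ'.toFun i) ∧ (∀ i, i₀ + k ≤ i → γ.toFun i = γ'.toFun i)

/-- `≃_k`: the smallest equivalence relation on paths from `v` to `w` containing the
relations (A) and (B)_k.  The closed `k`-fundamental group `π₁^k[G,v]` is the quotient of
loops at `v` by `≃_k`. -/
def CEq {V : Type*} (k : ℕ) {G : SimpleGraph V} {v w : V} : GPath G v w → GPath G v w → Prop :=
  Relation.EqvGen (fun γ γ' => RelA γ γ' ∨ RelB k γ γ')

/-- An edge-path of length `len` in a simplicial complex `K` (a family of finite subsets of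
a vertex set `V`, with a simplex encoded as a finite `Set V`) from `v` to `w`: a sequence of
vertices (encoded as a function `ℕ → V` that is constantly `w` from index `len` on) such
that each pair of consecutive vertices spans a simplex of `K`. -/
structure EPath {V : Type*} (K : Set (Set V)) (v w : V) where
  len : ℕ
  toFun : ℕ → V
  source : toFun 0 = v
  target : toFun len = w
  edge : ∀ i < len, ({toFun i, toFun (i + 1)} : Set V) ∈ K
  junk : ∀ i, len ≤ i → toFun i = w

namespace EPath

variable {V : Type*} {K : Set (Set V)}

/-- The constant edge-path of length 0 at a vertex. -/
def refl (K : Set (Set V)) (v : V) : EPath K v v where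
  len := 0
  toFun := fun _ => v
  source := rfl
  target := rfl
  edge := fun i hi => absurd hi (Nat.not_lt_zero i)
  junk := fun _ _ => rfl

/-- Concatenation of composable edge-paths. -/
def concat {u v w : V} (γ : EPath K u v) (δ : EPath K v w) : EPath K u w where
  len := γ.len + δ.len
  toFun := fun i => if i < γ.len then γ.toFun i else δ.toFun (i - γ.len)
  source := by
    by_cases h : 0 < γ.len
    · simpa [h] using γ.source
    · have h0 : γ.len = 0 := by omega
      have huv : u = v := by
        have h1 := γ.source; have h2 := γ.target
        rw [h0] at h2; rw [h1] at h2; exact h2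
      show (if 0 < γ.len then γ.toFun 0 else δ.toFun (0 - γ.len)) = u
      rw [if_neg h, Nat.zero_sub, δ.source]
      exact huv.symm
  target := by
    have h : ¬ γ.len + δ.len < γ.len := by omega
    have h2 : γ.len + δ.len - γ.len = δ.len := by omega
    simp only [h, if_false, h2, δ.target]
  edge := by
    intro i hi
    by_cases h1 : i + 1 < γ.len
    · have h0 : i < γ.len := by omega
      simpa [h0, h1] using γ.edge i h0
    · by_cases h0 : i < γ.len
      · have he : i + 1 = γ.len := by omega
        have h3 : i + 1 - γ.len = 0 := by omega
        have hval : δ.toFun (i + 1 - γ.len) = γ.toFun (i + 1) := by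
          rw [h3, δ.source, he, γ.target]
        simp only [h0, if_true, h1, if_false, hval]
        exact γ.edge i h0
      · have h3 : i + 1 - γ.len = (i - γ.len) + 1 := by omega
        simp only [h0, if_false, h1, if_false, h3]
        exact δ.edge (i - γ.len) (by omega)
  junk := by
    intro i hi
    have h : ¬ i < γ.len := by omega
    simp only [h, if_false]
    exact δ.junk _ (by omega)

end EPath

/-- `γ'` is obtained from the edge-path `γ` by deleting the vertex at position `j`. -/
def EDel {V : Type*} {K : Set (Set V)} {v w : V} (γ γ' : EPath K v w) (j : ℕ) : Prop :=
  γ.len = γ'.len + 1 ∧ (∀ i < j, γ'.toFun i = γ.toFun i) ∧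
    (∀ i, j ≤ i → γ'.toFun i = γ.toFun (i + 1))

/-- One step of edge-path homotopy: delete a vertex `v_j` with `1 ≤ j` such that either
(a) `v_{j-1} = v_j`, or (b) `{v_{j-1}, v_j, v_{j+1}}` is a simplex of `K`. -/
def EHomStep {V : Type*} (K : Set (Set V)) {v w : V} (γ γ' : EPath K v w) : Prop :=
  (∃ j, 1 ≤ j ∧ j ≤ γ.len ∧ γ.toFun (j - 1) = γ.toFun j ∧ EDel γ γ' j) ∨
  (∃ j, 1 ≤ j ∧ j + 1 ≤ γ.len ∧
    ({γ.toFun (j - 1), γ.toFun j, γ.toFun (j + 1)} : Set V) ∈ K ∧ EDel γ γ' j)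

/-- Edge-path homotopy: the smallest equivalence relation containing the elementary
deletions (a) and (b).  The edge-path group `E(K,v)` is the quotient of the set of
edge-paths from `v` to `v` by this relation. -/
def EHom {V : Type*} (K : Set (Set V)) {v w : V} : EPath K v w → EPath K v w → Prop :=
  Relation.EqvGen (EHomStep K)

/-- The closed `k`-neighborhood `N_G^k[v]`, defined recursively by `N_G^0[v] = {v}` and
`N_G^{k+1}[v] = ⋃_{w ∈ N_G^k[v]} N_G[w]` (so `N_G^1[v] = N_G[v]`). -/
def closedKNbhd {V : Type*} (G : SimpleGraph V) : ℕ → V → Set V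
  | 0, v => {v}
  | k + 1, v => ⋃ w ∈ closedKNbhd G k v, closedNbhd G w

/-- The closed `k`-neighborhood complex `N^k[G]`: the family of finite vertex sets contained
in the closed `k`-neighborhood of some vertex. -/
def closedKNbhdComplex {V : Type*} (G : SimpleGraph V) (k : ℕ) : Set (Set V) :=
  {σ : Set V | σ.Finite ∧ ∃ v : V, σ ⊆ closedKNbhd G k v}

/-!
Subdividing every edge `{a, b}` of `N^k[G]` into a path of length `2k` from `a` to `b` (both ends
lie in some `N^k[u]`) turns edge-paths into paths of `G`; conversely, for `k ≥ 1`, a path of `G` is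
an edge-path of `N^k[G]`. Both equivalences are generated by exchanging small subpaths: for
`≃_{2k}` subpaths of length at most `2k`, for edge-path homotopy subpaths inside one simplex. A
path of length at most `2k` stays in the closed `k`-neighborhood of its midpoint, hence in one
simplex; and the subdivision of an edge-path inside `N^k[u]` is `≃_{2k}` to a path `a → u → b`,
since consecutive detours through `u` cancel. So both maps descend to the quotients, where they are
mutually inverse (a single edge and its subdivision are small), and subdivision respects
concatenation.
-/

theorem Relation.EqvGen.map {α β : Type*} {r : α → α → Prop} {s : β → β → Prop} (f : α → β)
    (hf : ∀ a b, r a b → EqvGen s (f a) (f b)) {a b : α} (h : EqvGen r a b) :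
    EqvGen s (f a) (f b) :=
  ((EqvGen.is_equivalence s).comap f).eqvGen_iff.mp (EqvGen.mono hf a b h)

/-! ### Paths of a graph -/

namespace GPath

variable {V : Type*} {G : SimpleGraph V} {u v w x y a b : V}

@[ext]
theorem ext {γ δ : GPath G v w} (hlen : γ.len = δ.len) (hfun : γ.toFun = δ.toFun) : γ = δ := by
  cases γ; cases δ; cases hlen; cases hfun; rfl

theorem adj_or_eq (γ : GPath G v w) (i : ℕ) :
    G.Adj (γ.toFun i) (γ.toFun (i + 1)) ∨ γ.toFun i = γ.toFun (i + 1) := by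
  rcases lt_or_ge i γ.len with h | h
  · exact γ.step i h
  · exact Or.inr (by rw [γ.junk i h, γ.junk (i + 1) (by omega)])

theorem toFun_min_len (γ : GPath G v w) (i : ℕ) : γ.toFun (min i γ.len) = γ.toFun i := by
  rcases le_total i γ.len with h | h
  · rw [min_eq_left h]
  · rw [min_eq_right h, γ.target, γ.junk i h]

@[simp] theorem refl_len : (refl G v).len = 0 := rfl

@[simp] theorem reverse_len (γ : GPath G v w) : γ.reverse.len = γ.len := rfl

@[simp] theorem concat_len (γ : GPath G u v) (δ : GPath G v w) :
    (γ.concat δ).len = γ.len + δ.len := rfl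

theorem concat_toFun (γ : GPath G u v) (δ : GPath G v w) (i : ℕ) :
    (γ.concat δ).toFun i = if i < γ.len then γ.toFun i else δ.toFun (i - γ.len) := rfl

theorem concat_toFun_of_le (γ : GPath G u v) (δ : GPath G v w) {i : ℕ} (hi : i ≤ γ.len) :
    (γ.concat δ).toFun i = γ.toFun i := by
  rw [concat_toFun]
  split_ifs with h
  · rfl
  · rw [show i = γ.len by omega, Nat.sub_self, δ.source, γ.target]

theorem concat_toFun_add (γ : GPath G u v) (δ : GPath G v w) (i : ℕ) :
    (γ.concat δ).toFun (γ.len + i) = δ.toFun i := by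
  simp [concat_toFun]

theorem concat_assoc (γ₁ : GPath G u v) (γ₂ : GPath G v w) (γ₃ : GPath G w x) :
    (γ₁.concat γ₂).concat γ₃ = γ₁.concat (γ₂.concat γ₃) := by
  ext i
  · simp [Nat.add_assoc]
  · simp only [concat_toFun, concat_len]
    grind

@[simp] theorem refl_concat (γ : GPath G v w) : (refl G v).concat γ = γ := by
  ext i <;> simp [concat_toFun, refl]

@[simp] theorem concat_refl (γ : GPath G v w) : γ.concat (refl G w) = γ := by
  ext i
  · simp [refl]
  · simp only [concat_toFun]
    split_ifs with h
    · rfl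
    · exact (γ.junk i (by omega)).symm

def const (G : SimpleGraph V) (v : V) (n : ℕ) : GPath G v v where
  len := n
  toFun _ := v
  source := rfl
  target := rfl
  step _ _ := Or.inr rfl
  junk _ _ := rfl

@[simp] theorem const_len (n : ℕ) : (const G v n).len = n := rfl

def single (h : G.Adj x y ∨ x = y) : GPath G x y where
  len := 1
  toFun i := if i = 0 then x else y
  source := if_pos rfl
  target := if_neg one_ne_zero
  step i hi := by
    obtain rfl : i = 0 := by omega
    simpa using h
  junk i hi := if_neg (by omega)

@[simp] theorem single_len (h : G.Adj x y ∨ x = y) : (single h).len = 1 := rfl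

/-- The subpath between the indices `p ≤ q`. Its endpoints may be any terms provably equal to
`γ.toFun p` and `γ.toFun q`, so that slices of different paths can be concatenated. -/
def slice (γ : GPath G v w) (p q : ℕ) (hpq : p ≤ q) (ha : γ.toFun p = a) (hb : γ.toFun q = b) :
    GPath G a b where
  len := q - p
  toFun i := γ.toFun (min (p + i) q)
  source := by rwa [Nat.add_zero, min_eq_left hpq]
  target := by rwa [Nat.add_sub_cancel' hpq, min_self]
  step i hi := by
    rw [min_eq_left (by omega), min_eq_left (by omega)]
    exact γ.adj_or_eq (p + i)
  junk i hi := by rwa [min_eq_right (by omega)]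

@[simp] theorem slice_len (γ : GPath G v w) (p q : ℕ) (hpq : p ≤ q) (ha : γ.toFun p = a)
    (hb : γ.toFun q = b) : (γ.slice p q hpq ha hb).len = q - p := rfl

theorem slice_concat_slice (γ : GPath G v w) {p q r : ℕ} (hpq : p ≤ q) (hqr : q ≤ r)
    (ha : γ.toFun p = a) (hb : γ.toFun q = b) (hx : γ.toFun r = x) :
    (γ.slice p q hpq ha hb).concat (γ.slice q r hqr hb hx) =
      γ.slice p r (hpq.trans hqr) ha hx := by
  ext i
  · simp only [concat_len, slice_len]
    omega
  · simp only [concat_toFun, slice]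
    split_ifs <;> congr 1 <;> omega

theorem slice_self (γ : GPath G v w) :
    γ.slice 0 γ.len (Nat.zero_le _) γ.source γ.target = γ := by
  ext i
  · simp
  · simp only [slice, Nat.zero_add]
    exact γ.toFun_min_len i

theorem exists_split {γ γ' : GPath G v w} {p q q' : ℕ} (hpq : p ≤ q) (hpq' : p ≤ q')
    (hq : q ≤ γ.len) (hq' : q' ≤ γ'.len) (hlen : γ.len - q = γ'.len - q')
    (hpre : ∀ i ≤ p, γ'.toFun i = γ.toFun i) (hsuf : ∀ i, γ'.toFun (q' + i) = γ.toFun (q + i)) :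
    ∃ (α : GPath G v (γ.toFun p)) (β : GPath G (γ.toFun q) w),
      γ = α.concat ((γ.slice p q hpq rfl rfl).concat β) ∧
      γ' = α.concat ((γ'.slice p q' hpq' (hpre p le_rfl) (hsuf 0)).concat β) := by
  refine ⟨γ.slice 0 p (Nat.zero_le p) γ.source rfl, γ.slice q γ.len hq rfl γ.target, ?_, ?_⟩
  · rw [slice_concat_slice, slice_concat_slice, slice_self]
  · have hα : γ.slice 0 p (Nat.zero_le p) γ.source rfl =
        γ'.slice 0 p (Nat.zero_le p) γ'.source (hpre p le_rfl) :=
      ext rfl (funext fun i => (hpre _ (min_le_right _ _)).symm)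
    have hβ : γ.slice q γ.len hq rfl γ.target = γ'.slice q' γ'.len hq' (hsuf 0) γ'.target := by
      refine ext hlen (funext fun i => ?_)
      simp only [slice]
      rw [show min (q + i) γ.len = q + min i (γ.len - q) by omega,
        show min (q' + i) γ'.len = q' + min i (γ'.len - q') by omega, hlen, hsuf]
    rw [hα, hβ, slice_concat_slice, slice_concat_slice, slice_self]

def ShortSwap (m : ℕ) (γ γ' : GPath G v w) : Prop :=
  ∃ (a b : V) (α : GPath G v a) (σ σ' : GPath G a b) (β : GPath G b w),
    σ.len ≤ m ∧ σ'.len ≤ m ∧ γ = α.concat (σ.concat β) ∧ γ' = α.concat (σ'.concat β)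

theorem ShortSwap.mono {m n : ℕ} {γ γ' : GPath G v w} (h : ShortSwap m γ γ') (hmn : m ≤ n) :
    ShortSwap n γ γ' := by
  obtain ⟨a, b, α, σ, σ', β, hσ, hσ', h₁, h₂⟩ := h
  exact ⟨a, b, α, σ, σ', β, hσ.trans hmn, hσ'.trans hmn, h₁, h₂⟩

end GPath

/-! ### The relations `≃_m` -/

section Relations

open GPath

variable {V : Type*} {G : SimpleGraph V} {u v w x : V} {m : ℕ} {γ γ' : GPath G v w}

theorem RelA.concat_left (α : GPath G u v) (h : RelA γ γ') :
    RelA (α.concat γ) (α.concat γ') := by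
  obtain ⟨hlen, y, hy, hpre, hsuf⟩ := h
  refine ⟨by simp [hlen]; omega, α.len + y, by simp; omega, fun i hi => ?_, fun i hi => ?_⟩
  · rcases le_or_gt i α.len with h | h
    · rw [concat_toFun_of_le _ _ h, concat_toFun_of_le _ _ h]
    · obtain ⟨j, rfl⟩ := Nat.exists_eq_add_of_le h.le
      rw [concat_toFun_add, concat_toFun_add]
      exact hpre j (by omega)
  · obtain ⟨j, rfl⟩ := Nat.exists_eq_add_of_le (show α.len ≤ i by omega)
    rw [concat_toFun_add, Nat.add_assoc, concat_toFun_add]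
    exact hsuf j (by omega)

theorem RelA.concat_right (β : GPath G w x) (h : RelA γ γ') :
    RelA (γ.concat β) (γ'.concat β) := by
  obtain ⟨hlen, y, hy, hpre, hsuf⟩ := h
  refine ⟨by simp [hlen]; omega, y, by simp; omega, fun i hi => ?_, fun i hi => ?_⟩
  · rw [concat_toFun_of_le _ _ (hi.trans hy), concat_toFun_of_le _ _ (by omega)]
    exact hpre i hi
  · rcases le_or_gt i γ.len with h | h
    · rw [concat_toFun_of_le _ _ h, concat_toFun_of_le _ _ (by omega)]
      exact hsuf i hi
    · obtain ⟨j, rfl⟩ := Nat.exists_eq_add_of_le h.le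
      rw [concat_toFun_add, show γ.len + j + 1 = γ'.len + j by omega, concat_toFun_add]

theorem RelB.concat_left (α : GPath G u v) (h : RelB m γ γ') :
    RelB m (α.concat γ) (α.concat γ') := by
  obtain ⟨hlen, i₀, hi₀, hpre, hsuf⟩ := h
  refine ⟨by simp [hlen], α.len + i₀, by simp; omega, fun i hi => ?_, fun i hi => ?_⟩
  · rcases le_or_gt i α.len with h | h
    · rw [concat_toFun_of_le _ _ h, concat_toFun_of_le _ _ h]
    · obtain ⟨j, rfl⟩ := Nat.exists_eq_add_of_le h.le
      rw [concat_toFun_add, concat_toFun_add]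
      exact hpre j (by omega)
  · obtain ⟨j, rfl⟩ := Nat.exists_eq_add_of_le (show α.len ≤ i by omega)
    rw [concat_toFun_add, concat_toFun_add]
    exact hsuf j (by omega)

theorem RelB.concat_right (β : GPath G w x) (h : RelB m γ γ') :
    RelB m (γ.concat β) (γ'.concat β) := by
  obtain ⟨hlen, i₀, hi₀, hpre, hsuf⟩ := h
  refine ⟨by simp [hlen], i₀, by simp; omega, fun i hi => ?_, fun i hi => ?_⟩
  · rw [concat_toFun_of_le _ _ (hi.trans hi₀), concat_toFun_of_le _ _ (by omega)]
    exact hpre i hi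
  · rcases le_or_gt i γ.len with h | h
    · rw [concat_toFun_of_le _ _ h, concat_toFun_of_le _ _ (by omega)]
      exact hsuf i hi
    · obtain ⟨j, rfl⟩ := Nat.exists_eq_add_of_le h.le
      rw [concat_toFun_add, hlen, concat_toFun_add]

theorem RelA.shortSwap (h : RelA γ γ') : ShortSwap 1 γ γ' := by
  obtain ⟨hlen, y, hy, hpre, hsuf⟩ := h
  have hsuf' : ∀ i, γ'.toFun (y + 1 + i) = γ.toFun (y + i) := fun i => by
    rw [show y + 1 + i = y + i + 1 by omega]
    exact (hsuf _ (by omega)).symm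
  obtain ⟨α, β, h₁, h₂⟩ := GPath.exists_split le_rfl (Nat.le_succ y) hy (by omega) (by omega)
    (fun i hi => (hpre i hi).symm) hsuf'
  exact ⟨_, _, α, _, _, β, by simp, by simp, h₁, h₂⟩

theorem RelB.shortSwap (h : RelB m γ γ') : ShortSwap m γ γ' := by
  obtain ⟨hlen, i₀, hi₀, hpre, hsuf⟩ := h
  have hsuf' : ∀ i, γ'.toFun (min (i₀ + m) γ.len + i) = γ.toFun (min (i₀ + m) γ.len + i) := by
    intro i
    rcases le_total (i₀ + m) γ.len with h | h
    · exact (hsuf _ (by omega)).symm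
    · rw [γ.junk _ (by omega), γ'.junk _ (by omega)]
  obtain ⟨α, β, h₁, h₂⟩ := GPath.exists_split (by omega) (by omega) (min_le_right _ _)
    (by omega) (by omega) (fun i hi => (hpre i hi).symm) hsuf'
  exact ⟨_, _, α, _, _, β, by simp; omega, by simp; omega, h₁, h₂⟩

end Relations

namespace CEq

variable {V : Type*} {G : SimpleGraph V} {u v w x : V} {m : ℕ} {γ γ' γ'' : GPath G v w}

theorem refl (γ : GPath G v w) : CEq m γ γ := Relation.EqvGen.refl γ

theorem symm (h : CEq m γ γ') : CEq m γ' γ := Relation.EqvGen.symm _ _ h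

theorem trans (h : CEq m γ γ') (h' : CEq m γ' γ'') : CEq m γ γ'' :=
  Relation.EqvGen.trans _ _ _ h h'

theorem of_relA (h : RelA γ γ') : CEq m γ γ' := Relation.EqvGen.rel _ _ (Or.inl h)

theorem of_relB (h : RelB m γ γ') : CEq m γ γ' := Relation.EqvGen.rel _ _ (Or.inr h)

theorem concat_left (α : GPath G u v) (h : CEq m γ γ') : CEq m (α.concat γ) (α.concat γ') :=
  Relation.EqvGen.map (α.concat ·) (fun _ _ h =>
    Relation.EqvGen.rel _ _ (h.imp (RelA.concat_left α) (RelB.concat_left α))) h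

theorem concat_right (β : GPath G w x) (h : CEq m γ γ') : CEq m (γ.concat β) (γ'.concat β) :=
  Relation.EqvGen.map (fun δ : GPath G v w => δ.concat β) (fun _ _ h =>
    Relation.EqvGen.rel _ _ (h.imp (RelA.concat_right β) (RelB.concat_right β))) h

theorem concat {δ δ' : GPath G w x} (h : CEq m γ γ') (h' : CEq m δ δ') :
    CEq m (γ.concat δ) (γ'.concat δ') :=
  (h.concat_right δ).trans (h'.concat_left γ')

end CEq

section ShortPaths

open GPath

variable {V : Type*} {G : SimpleGraph V} {v w : V} {m : ℕ}

theorem ceq_const_refl (v : V) (n : ℕ) : CEq m (const G v n) (refl G v) := by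
  induction n with
  | zero => exact CEq.refl _
  | succ n ih =>
    have h : RelA (const G v n) (const G v (n + 1)) :=
      ⟨rfl, 0, Nat.zero_le _, fun _ _ => rfl, fun _ _ => rfl⟩
    exact (CEq.of_relA h).symm.trans ih

theorem ceq_concat_const (γ : GPath G v w) (n : ℕ) : CEq m γ (γ.concat (const G w n)) := by
  simpa using (ceq_const_refl w n).symm.concat_left γ

theorem ceq_of_len_eq {γ δ : GPath G v w} (h : γ.len = δ.len) (hm : γ.len ≤ m) : CEq m γ δ :=
  CEq.of_relB ⟨h, 0, Nat.zero_le _,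
    fun i hi => by rw [Nat.le_zero.mp hi, γ.source, δ.source],
    fun i hi => by rw [γ.junk i (by omega), δ.junk i (by omega)]⟩

theorem ceq_of_len_le {γ δ : GPath G v w} (hγ : γ.len ≤ m) (hδ : δ.len ≤ m) : CEq m γ δ :=
  (ceq_concat_const γ (m - γ.len)).trans
    ((ceq_of_len_eq (by simp; omega) (by simp; omega)).trans
      (ceq_concat_const δ (m - δ.len)).symm)

end ShortPaths

/-! ### Closed neighborhoods -/

section Neighborhoods

variable {V : Type*} {G : SimpleGraph V} {v w x y : V} {n k : ℕ}

theorem mem_closedNbhd_iff : y ∈ closedNbhd G x ↔ G.Adj x y ∨ x = y := by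
  simp [closedNbhd, eq_comm, or_comm]

theorem mem_closedKNbhd_succ :
    y ∈ closedKNbhd G (n + 1) x ↔ ∃ z ∈ closedKNbhd G n x, y ∈ closedNbhd G z := by
  simp [closedKNbhd]

theorem closedKNbhd_mono (x : V) : Monotone (closedKNbhd G · x) :=
  monotone_nat_of_le_succ fun _ y hy =>
    mem_closedKNbhd_succ.mpr ⟨y, hy, mem_closedNbhd_iff.mpr (Or.inr rfl)⟩

theorem mem_closedKNbhdComplex_of_subset {u : V} (τ : Set V) (hτ : τ.Finite)
    (hsub : τ ⊆ closedKNbhd G k u) : τ ∈ closedKNbhdComplex G k :=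
  ⟨hτ, u, hsub⟩

namespace GPath

theorem toFun_add_mem_closedKNbhd (γ : GPath G v w) (i n : ℕ) :
    γ.toFun (i + n) ∈ closedKNbhd G n (γ.toFun i) := by
  induction n with
  | zero => rfl
  | succ n ih => exact mem_closedKNbhd_succ.mpr ⟨_, ih, mem_closedNbhd_iff.mpr (γ.adj_or_eq _)⟩

theorem toFun_mem_closedKNbhd_add (γ : GPath G v w) (i n : ℕ) :
    γ.toFun i ∈ closedKNbhd G n (γ.toFun (i + n)) := by
  induction n generalizing i with
  | zero => rfl
  | succ n ih =>
    refine mem_closedKNbhd_succ.mpr ⟨γ.toFun (i + 1), ?_, mem_closedNbhd_iff.mpr ?_⟩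
    · rw [show i + (n + 1) = i + 1 + n by omega]
      exact ih (i + 1)
    · exact (γ.adj_or_eq i).imp SimpleGraph.Adj.symm Eq.symm

theorem toFun_mem_closedKNbhd (γ : GPath G v w) {i j : ℕ} (hij : i ≤ j + n) (hji : j ≤ i + n) :
    γ.toFun i ∈ closedKNbhd G n (γ.toFun j) := by
  rcases le_total j i with h | h
  · obtain ⟨d, rfl⟩ := Nat.exists_eq_add_of_le h
    exact closedKNbhd_mono _ (by omega) (γ.toFun_add_mem_closedKNbhd j d)
  · obtain ⟨d, rfl⟩ := Nat.exists_eq_add_of_le h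
    exact closedKNbhd_mono _ (by omega) (γ.toFun_mem_closedKNbhd_add i d)

theorem toFun_mem_closedKNbhd_of_len_le (γ : GPath G v w) (hγ : γ.len ≤ 2 * k) (i : ℕ) :
    γ.toFun i ∈ closedKNbhd G k (γ.toFun k) := by
  rw [← γ.toFun_min_len i]
  exact γ.toFun_mem_closedKNbhd (by omega) (by omega)

end GPath

theorem exists_gpath_of_mem_closedKNbhd (h : y ∈ closedKNbhd G n x) :
    ∃ γ : GPath G x y, γ.len = n := by
  induction n generalizing y with
  | zero =>
    obtain rfl : y = x := h
    exact ⟨GPath.refl G y, rfl⟩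
  | succ n ih =>
    obtain ⟨z, hz, hy⟩ := mem_closedKNbhd_succ.mp h
    obtain ⟨γ, hγ⟩ := ih hz
    exact ⟨γ.concat (.single (mem_closedNbhd_iff.mp hy)), by simp [hγ]⟩

theorem exists_gpath_of_mem_closedKNbhdComplex (h : ({x, y} : Set V) ∈ closedKNbhdComplex G k) :
    ∃ γ : GPath G x y, γ.len = 2 * k := by
  obtain ⟨-, u, hsub⟩ := h
  obtain ⟨γ, hγ⟩ := exists_gpath_of_mem_closedKNbhd (hsub (Set.mem_insert x _))
  obtain ⟨δ, hδ⟩ := exists_gpath_of_mem_closedKNbhd (hsub (Set.mem_insert_of_mem x rfl))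
  exact ⟨γ.reverse.concat δ, by simp [hγ, hδ]; omega⟩

end Neighborhoods

/-! ### Edge-paths -/

namespace EPath

variable {V : Type*} {K : Set (Set V)} {u v w x a b : V}

@[ext]
theorem ext {ε δ : EPath K v w} (hlen : ε.len = δ.len) (hfun : ε.toFun = δ.toFun) : ε = δ := by
  cases ε; cases δ; cases hlen; cases hfun; rfl

theorem toFun_min_len (ε : EPath K v w) (i : ℕ) : ε.toFun (min i ε.len) = ε.toFun i := by
  rcases le_total i ε.len with h | h
  · rw [min_eq_left h]
  · rw [min_eq_right h, ε.target, ε.junk i h]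

@[simp] theorem concat_len (ε : EPath K u v) (δ : EPath K v w) :
    (ε.concat δ).len = ε.len + δ.len := rfl

theorem concat_toFun (ε : EPath K u v) (δ : EPath K v w) (i : ℕ) :
    (ε.concat δ).toFun i = if i < ε.len then ε.toFun i else δ.toFun (i - ε.len) := rfl

theorem concat_toFun_of_le (ε : EPath K u v) (δ : EPath K v w) {i : ℕ} (hi : i ≤ ε.len) :
    (ε.concat δ).toFun i = ε.toFun i := by
  rw [concat_toFun]
  split_ifs with h
  · rfl
  · rw [show i = ε.len by omega, Nat.sub_self, δ.source, ε.target]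

theorem concat_toFun_add (ε : EPath K u v) (δ : EPath K v w) (i : ℕ) :
    (ε.concat δ).toFun (ε.len + i) = δ.toFun i := by
  simp [concat_toFun]

def slice (ε : EPath K v w) (p q : ℕ) (hpq : p ≤ q) (hq : q ≤ ε.len) (ha : ε.toFun p = a)
    (hb : ε.toFun q = b) : EPath K a b where
  len := q - p
  toFun i := ε.toFun (min (p + i) q)
  source := by rwa [Nat.add_zero, min_eq_left hpq]
  target := by rwa [Nat.add_sub_cancel' hpq, min_self]
  edge i hi := by
    rw [min_eq_left (by omega), min_eq_left (by omega)]
    exact ε.edge (p + i) (by omega)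
  junk i hi := by rwa [min_eq_right (by omega)]

@[simp] theorem slice_len (ε : EPath K v w) (p q : ℕ) (hpq : p ≤ q) (hq : q ≤ ε.len)
    (ha : ε.toFun p = a) (hb : ε.toFun q = b) : (ε.slice p q hpq hq ha hb).len = q - p := rfl

theorem slice_toFun (ε : EPath K v w) (p q : ℕ) (hpq : p ≤ q) (hq : q ≤ ε.len)
    (ha : ε.toFun p = a) (hb : ε.toFun q = b) (i : ℕ) :
    (ε.slice p q hpq hq ha hb).toFun i = ε.toFun (min (p + i) q) := rfl

theorem slice_concat_slice (ε : EPath K v w) {p q r : ℕ} (hpq : p ≤ q) (hqr : q ≤ r)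
    (hr : r ≤ ε.len) (ha : ε.toFun p = a) (hb : ε.toFun q = b) (hx : ε.toFun r = x) :
    (ε.slice p q hpq (hqr.trans hr) ha hb).concat (ε.slice q r hqr hr hb hx) =
      ε.slice p r (hpq.trans hqr) hr ha hx := by
  ext i
  · simp only [concat_len, slice_len]; omega
  · simp only [concat_toFun, slice]
    split_ifs <;> congr 1 <;> omega

theorem slice_self (ε : EPath K v w) :
    ε.slice 0 ε.len (Nat.zero_le _) le_rfl ε.source ε.target = ε := by
  ext i
  · simp
  · simp only [slice, Nat.zero_add]
    exact ε.toFun_min_len i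

theorem exists_split {ε ε' : EPath K v w} {p q q' : ℕ} (hpq : p ≤ q) (hpq' : p ≤ q')
    (hq : q ≤ ε.len) (hq' : q' ≤ ε'.len) (hlen : ε.len - q = ε'.len - q')
    (hpre : ∀ i ≤ p, ε'.toFun i = ε.toFun i) (hsuf : ∀ i, ε'.toFun (q' + i) = ε.toFun (q + i)) :
    ∃ (α : EPath K v (ε.toFun p)) (β : EPath K (ε.toFun q) w),
      ε = α.concat ((ε.slice p q hpq hq rfl rfl).concat β) ∧
      ε' = α.concat ((ε'.slice p q' hpq' hq' (hpre p le_rfl) (hsuf 0)).concat β) := by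
  refine ⟨ε.slice 0 p (Nat.zero_le p) (hpq.trans hq) ε.source rfl,
    ε.slice q ε.len hq le_rfl rfl ε.target, ?_, ?_⟩
  · rw [slice_concat_slice, slice_concat_slice, slice_self]
  · have hα : ε.slice 0 p (Nat.zero_le p) (hpq.trans hq) ε.source rfl =
        ε'.slice 0 p (Nat.zero_le p) (hpq'.trans hq') ε'.source (hpre p le_rfl) :=
      ext rfl (funext fun i => (hpre _ (min_le_right _ _)).symm)
    have hβ : ε.slice q ε.len hq le_rfl rfl ε.target =
        ε'.slice q' ε'.len hq' le_rfl (hsuf 0) ε'.target := by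
      refine ext hlen (funext fun i => ?_)
      simp only [slice]
      rw [show min (q + i) ε.len = q + min i (ε.len - q) by omega,
        show min (q' + i) ε'.len = q' + min i (ε'.len - q') by omega, hlen, hsuf]
    rw [hα, hβ, slice_concat_slice, slice_concat_slice, slice_self]

def single (h : ({a, b} : Set V) ∈ K) : EPath K a b where
  len := 1
  toFun i := if i = 0 then a else b
  source := if_pos rfl
  target := if_neg one_ne_zero
  edge i hi := by
    obtain rfl : i = 0 := by omega
    simpa using h
  junk i hi := if_neg (by omega)

@[simp] theorem single_len (h : ({a, b} : Set V) ∈ K) : (single h).len = 1 := rfl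

end EPath

section EHomShift

open EPath

variable {V : Type*} {K : Set (Set V)} {u v w x : V} {ε ε' : EPath K v w} {j : ℕ}

theorem EDel.concat_left (α : EPath K u v) (h : EDel ε ε' j) :
    EDel (α.concat ε) (α.concat ε') (α.len + j) := by
  obtain ⟨hlen, hpre, hsuf⟩ := h
  refine ⟨by simp [hlen]; omega, fun i hi => ?_, fun i hi => ?_⟩
  · rcases le_or_gt i α.len with h | h
    · rw [concat_toFun_of_le _ _ h, concat_toFun_of_le _ _ h]
    · obtain ⟨i, rfl⟩ := Nat.exists_eq_add_of_le h.le
      rw [concat_toFun_add, concat_toFun_add]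
      exact hpre i (by omega)
  · obtain ⟨i, rfl⟩ := Nat.exists_eq_add_of_le (show α.len ≤ i by omega)
    rw [concat_toFun_add, Nat.add_assoc, concat_toFun_add]
    exact hsuf i (by omega)

theorem EDel.concat_right (β : EPath K w x) (h : EDel ε ε' j) (hj : j ≤ ε.len) :
    EDel (ε.concat β) (ε'.concat β) j := by
  obtain ⟨hlen, hpre, hsuf⟩ := h
  refine ⟨by simp [hlen]; omega, fun i hi => ?_, fun i hi => ?_⟩
  · rw [concat_toFun_of_le _ _ (by omega), concat_toFun_of_le _ _ (by omega)]
    exact hpre i hi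
  · rcases le_or_gt i ε'.len with h | h
    · rw [concat_toFun_of_le _ _ h, concat_toFun_of_le _ _ (by omega)]
      exact hsuf i hi
    · obtain ⟨i, rfl⟩ := Nat.exists_eq_add_of_le h.le
      rw [concat_toFun_add, show ε'.len + i + 1 = ε.len + i by omega, concat_toFun_add]

theorem EHomStep.concat_left (α : EPath K u v) (h : EHomStep K ε ε') :
    EHomStep K (α.concat ε) (α.concat ε') := by
  rcases h with ⟨j, hj, hjl, heq, hdel⟩ | ⟨j, hj, hjl, htri, hdel⟩
  · refine Or.inl ⟨α.len + j, by omega, by simp; omega, ?_, hdel.concat_left α⟩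
    rwa [show α.len + j - 1 = α.len + (j - 1) by omega, concat_toFun_add, concat_toFun_add]
  · refine Or.inr ⟨α.len + j, by omega, by simp; omega, ?_, hdel.concat_left α⟩
    rwa [show α.len + j - 1 = α.len + (j - 1) by omega, concat_toFun_add, concat_toFun_add,
      Nat.add_assoc, concat_toFun_add]

theorem EHomStep.concat_right (β : EPath K w x) (h : EHomStep K ε ε') :
    EHomStep K (ε.concat β) (ε'.concat β) := by
  rcases h with ⟨j, hj, hjl, heq, hdel⟩ | ⟨j, hj, hjl, htri, hdel⟩
  · refine Or.inl ⟨j, hj, by simp; omega, ?_, hdel.concat_right β hjl⟩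
    rwa [concat_toFun_of_le _ _ (by omega), concat_toFun_of_le _ _ hjl]
  · refine Or.inr ⟨j, hj, by simp; omega, ?_, hdel.concat_right β (by omega)⟩
    rwa [concat_toFun_of_le _ _ (by omega), concat_toFun_of_le _ _ (by omega),
      concat_toFun_of_le _ _ hjl]

end EHomShift

namespace EHom

variable {V : Type*} {K : Set (Set V)} {u v w x : V} {ε ε' ε'' : EPath K v w}

theorem refl (ε : EPath K v w) : EHom K ε ε := Relation.EqvGen.refl ε

theorem symm (h : EHom K ε ε') : EHom K ε' ε := Relation.EqvGen.symm _ _ h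

theorem trans (h : EHom K ε ε') (h' : EHom K ε' ε'') : EHom K ε ε'' :=
  Relation.EqvGen.trans _ _ _ h h'

theorem of_step (h : EHomStep K ε ε') : EHom K ε ε' := Relation.EqvGen.rel _ _ h

theorem of_eq (h : ε = ε') : EHom K ε ε' := h ▸ refl ε

theorem concat_left (α : EPath K u v) (h : EHom K ε ε') : EHom K (α.concat ε) (α.concat ε') :=
  Relation.EqvGen.map (α.concat ·) (fun _ _ h => of_step (h.concat_left α)) h

theorem concat_right (β : EPath K w x) (h : EHom K ε ε') : EHom K (ε.concat β) (ε'.concat β) :=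
  Relation.EqvGen.map (fun δ : EPath K v w => δ.concat β)
    (fun _ _ h => of_step (h.concat_right β)) h

theorem concat {δ δ' : EPath K w x} (h : EHom K ε ε') (h' : EHom K δ δ') :
    EHom K (ε.concat δ) (ε'.concat δ') :=
  (h.concat_right δ).trans (h'.concat_left ε')

end EHom

section FullSets

open EPath

variable {V : Type*} {K : Set (Set V)} {v w a b : V} {S : Set V}

theorem ehom_single_of_forall_mem (hS : ∀ τ : Set V, τ.Finite → τ ⊆ S → τ ∈ K)
    (hab : ({a, b} : Set V) ∈ K) (ε : EPath K a b) (hε : ∀ i, ε.toFun i ∈ S) :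
    EHom K ε (single hab) := by
  induction hn : ε.len using Nat.strong_induction_on generalizing ε with
  | _ n ih =>
  match n, hn with
  | 0, hn =>
    have hba : a = b := ε.source.symm.trans (hn ▸ ε.target)
    refine (EHom.of_step (Or.inl ⟨1, le_rfl, le_rfl, hba, by simp [single, hn], ?_, ?_⟩)).symm
    · intro i hi
      rw [Nat.lt_one_iff.mp hi, ε.source]
      rfl
    · exact fun i hi => ε.junk i (by omega)
  | 1, hn =>
    refine EHom.of_eq (ext hn (funext fun i => ?_))
    rcases Nat.eq_zero_or_pos i with rfl | hi
    · exact ε.source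
    · exact (ε.junk i (by omega)).trans (if_neg (by omega)).symm
  | n + 2, hn =>
    have ha : a ∈ S := ε.source ▸ hε 0
    have hac : ({a, ε.toFun 2} : Set V) ∈ K :=
      hS _ (Set.toFinite _) (Set.insert_subset_iff.mpr ⟨ha, Set.singleton_subset_iff.mpr (hε 2)⟩)
    have hsplit : ε = (ε.slice 0 2 (by omega) (by omega) ε.source rfl).concat
        (ε.slice 2 ε.len (by omega) le_rfl rfl ε.target) := by
      rw [slice_concat_slice, slice_self]
    -- the vertex `ε.toFun 1` can be deleted since `{ε.toFun 0, ε.toFun 1, ε.toFun 2} ⊆ S`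
    have hstep : EHomStep K (ε.slice 0 2 (by omega) (by omega) ε.source rfl) (single hac) := by
      refine Or.inr ⟨1, le_rfl, by simp, ?_, by simp [single], ?_, ?_⟩
      · simp only [slice_toFun]
        exact hS _ (Set.toFinite _) (by simp [Set.insert_subset_iff, hε])
      · intro i hi
        rw [Nat.lt_one_iff.mp hi]
        exact ε.source.symm
      · intro i hi
        simp only [single, slice_toFun]
        rw [if_neg (by omega), min_eq_right (by omega)]
    rw [hsplit]
    refine ((EHom.of_step hstep).concat_right _).trans
      (ih (n + 1) (by omega) _ ?_ (by simp; omega))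
    intro i
    simp only [concat_toFun, single, slice_toFun]
    split_ifs
    exacts [ha, hε 2, hε _]

theorem ehom_of_forall_mem (hS : ∀ τ : Set V, τ.Finite → τ ⊆ S → τ ∈ K) {ε ε' : EPath K a b}
    (hε : ∀ i, ε.toFun i ∈ S) (hε' : ∀ i, ε'.toFun i ∈ S) : EHom K ε ε' :=
  have hab : ({a, b} : Set V) ∈ K := hS _ (Set.toFinite _)
    (Set.insert_subset_iff.mpr ⟨ε.source ▸ hε 0, Set.singleton_subset_iff.mpr (ε.target ▸ hε _)⟩)
  (ehom_single_of_forall_mem hS hab ε hε).trans (ehom_single_of_forall_mem hS hab ε' hε').symm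

end FullSets

section SplitStep

open EPath

variable {V : Type*} {K : Set (Set V)} {v w : V} {ε ε' : EPath K v w}

theorem EHomStep.exists_split (h : EHomStep K ε ε') :
    ∃ (a c : V) (α : EPath K v a) (σ σ' : EPath K a c) (β : EPath K c w), ∃ τ ∈ K,
      (∀ i, σ.toFun i ∈ τ) ∧ (∀ i, σ'.toFun i ∈ τ) ∧
      ε = α.concat (σ.concat β) ∧ ε' = α.concat (σ'.concat β) := by
  rcases h with ⟨j, hj, hjl, heq, hlen, hpre, hsuf⟩ | ⟨j, hj, hjl, htri, hlen, hpre, hsuf⟩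
  -- (a): the window `[j - 1, j]` of `ε` shrinks to the vertex `j - 1` of `ε'`
  · have hsuf' : ∀ i, ε'.toFun (j - 1 + i) = ε.toFun (j + i) := by
      intro i
      rcases Nat.eq_zero_or_pos i with rfl | hi
      · rw [Nat.add_zero, Nat.add_zero, hpre _ (by omega), heq]
      · rw [hsuf _ (by omega)]
        congr 1
        omega
    obtain ⟨α, β, h₁, h₂⟩ := EPath.exists_split (Nat.sub_le j 1) le_rfl hjl (by omega) (by omega)
      (fun i hi => hpre i (by omega)) hsuf'
    have hτ : ({ε.toFun (j - 1), ε.toFun j} : Set V) ∈ K := by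
      simpa [Nat.sub_add_cancel hj] using ε.edge (j - 1) (by omega)
    refine ⟨_, _, α, _, _, β, _, hτ, fun i => ?_, fun i => ?_, h₁, h₂⟩
    · rcases (show min (j - 1 + i) j = j - 1 ∨ min (j - 1 + i) j = j by omega) with h | h <;>
        simp [slice_toFun, h]
    · simp [slice_toFun, hpre (j - 1) (by omega)]
  -- (b): the window `[j - 1, j + 1]` of `ε` shrinks to `[j - 1, j]` in `ε'`
  · have hsuf' : ∀ i, ε'.toFun (j + i) = ε.toFun (j + 1 + i) := fun i => by
      rw [hsuf _ (by omega), Nat.add_right_comm]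
    obtain ⟨α, β, h₁, h₂⟩ := EPath.exists_split (by omega : j - 1 ≤ j + 1) (Nat.sub_le j 1) hjl
      (by omega) (by omega) (fun i hi => hpre i (by omega)) hsuf'
    refine ⟨_, _, α, _, _, β, _, htri, fun i => ?_, fun i => ?_, h₁, h₂⟩
    · rcases (show min (j - 1 + i) (j + 1) = j - 1 ∨ min (j - 1 + i) (j + 1) = j ∨
          min (j - 1 + i) (j + 1) = j + 1 by omega) with h | h | h <;>
        simp [slice_toFun, h]
    · rcases (show min (j - 1 + i) j = j - 1 ∨ min (j - 1 + i) j = j by omega) with h | h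
      · simp [slice_toFun, h, hpre (j - 1) (by omega)]
      · simp [slice_toFun, h, hsuf j le_rfl]

end SplitStep

/-! ### Subdivision -/

theorem mul_add_lt_mul_iff {n q r L : ℕ} (hr : r < n) : n * q + r < n * L ↔ q < L := by
  constructor
  · intro h
    by_contra h'
    push Not at h'
    nlinarith [Nat.mul_le_mul_left n h']
  · intro h
    nlinarith [Nat.mul_le_mul_left n h]

section Subdivision

variable {V : Type*} {G : SimpleGraph V} {u v w a b : V} {k : ℕ}

open Classical in
/-- A chosen path of length `2k` from `a` to `b`, as a vertex sequence (constant if there is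
none). -/
noncomputable def edgeSegment (G : SimpleGraph V) (k : ℕ) (a b : V) : ℕ → V :=
  if h : ∃ γ : GPath G a b, γ.len = 2 * k then h.choose.toFun else fun _ => a

theorem edgeSegment_zero : edgeSegment G k a b 0 = a := by
  unfold edgeSegment
  split_ifs with h
  · exact h.choose.source
  · rfl

theorem exists_gpath_toFun_eq_edgeSegment (h : ({a, b} : Set V) ∈ closedKNbhdComplex G k) :
    ∃ γ : GPath G a b, γ.len = 2 * k ∧ γ.toFun = edgeSegment G k a b := by
  have hex := exists_gpath_of_mem_closedKNbhdComplex h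
  exact ⟨hex.choose, hex.choose_spec, by rw [edgeSegment, dif_pos hex]⟩

namespace EPath

/-- The vertex sequence of `toGPath`: the `q`-th edge is traversed along its segment during the
times `2kq, …, 2kq + 2k`. -/
noncomputable def toGPathFun (ε : EPath (closedKNbhdComplex G k) v w) (j : ℕ) : V :=
  if j < 2 * k * ε.len then
    edgeSegment G k (ε.toFun (j / (2 * k))) (ε.toFun (j / (2 * k) + 1)) (j % (2 * k))
  else w

theorem toGPathFun_mul_add (hk : 1 ≤ k) (ε : EPath (closedKNbhdComplex G k) v w) {q r : ℕ}
    (hq : q < ε.len) (hr : r ≤ 2 * k) :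
    ε.toGPathFun (2 * k * q + r) = edgeSegment G k (ε.toFun q) (ε.toFun (q + 1)) r := by
  rcases hr.lt_or_eq with hr | rfl
  · rw [toGPathFun, if_pos ((mul_add_lt_mul_iff hr).mpr hq), Nat.mul_add_div (by omega),
      Nat.mul_add_mod, Nat.div_eq_of_lt hr, Nat.mod_eq_of_lt hr, Nat.add_zero]
  -- a segment ends where the next one starts, or at `w` after the last edge
  obtain ⟨γ, hγ, hγs⟩ := exists_gpath_toFun_eq_edgeSegment (ε.edge q hq)
  rw [← hγs, ← hγ, γ.target, hγ, ← Nat.mul_succ, toGPathFun]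
  split_ifs with h
  · rw [Nat.mul_div_cancel_left _ (by omega), Nat.mul_mod_right, edgeSegment_zero]
  · rw [show q + 1 = ε.len by
      by_contra h'
      exact h ((Nat.mul_lt_mul_left (by omega)).mpr (by omega)), ε.target]

theorem toGPathFun_mul (hk : 1 ≤ k) (ε : EPath (closedKNbhdComplex G k) v w) {q : ℕ}
    (hq : q ≤ ε.len) : ε.toGPathFun (2 * k * q) = ε.toFun q := by
  rcases hq.lt_or_eq with hq | rfl
  · simpa [edgeSegment_zero] using ε.toGPathFun_mul_add hk hq (Nat.zero_le _)
  · rw [toGPathFun, if_neg (lt_irrefl _), ε.target]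

noncomputable def toGPath (hk : 1 ≤ k) (ε : EPath (closedKNbhdComplex G k) v w) :
    GPath G v w where
  len := 2 * k * ε.len
  toFun := ε.toGPathFun
  source := by simpa [ε.source] using ε.toGPathFun_mul hk (Nat.zero_le _)
  target := if_neg (lt_irrefl _)
  step j hj := by
    obtain ⟨q, r, hr, rfl⟩ : ∃ q r, r < 2 * k ∧ j = 2 * k * q + r :=
      ⟨j / (2 * k), j % (2 * k), Nat.mod_lt _ (by omega), (Nat.div_add_mod j (2 * k)).symm⟩
    have hq := (mul_add_lt_mul_iff hr).mp hj
    obtain ⟨γ, -, hγs⟩ := exists_gpath_toFun_eq_edgeSegment (ε.edge q hq)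
    rw [Nat.add_assoc, ε.toGPathFun_mul_add hk hq hr.le, ε.toGPathFun_mul_add hk hq hr, ← hγs]
    exact γ.adj_or_eq r
  junk j hj := if_neg (by omega)

@[simp] theorem toGPath_len (hk : 1 ≤ k) (ε : EPath (closedKNbhdComplex G k) v w) :
    (ε.toGPath hk).len = 2 * k * ε.len := rfl

theorem toGPath_toFun (hk : 1 ≤ k) (ε : EPath (closedKNbhdComplex G k) v w) :
    (ε.toGPath hk).toFun = ε.toGPathFun := rfl

theorem toGPath_concat (hk : 1 ≤ k) (ε : EPath (closedKNbhdComplex G k) u v)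
    (δ : EPath (closedKNbhdComplex G k) v w) :
    (ε.concat δ).toGPath hk = (ε.toGPath hk).concat (δ.toGPath hk) := by
  ext j
  · simp [Nat.mul_add]
  obtain ⟨q, r, hr, rfl⟩ : ∃ q r, r < 2 * k ∧ j = 2 * k * q + r :=
    ⟨j / (2 * k), j % (2 * k), Nat.mod_lt _ (by omega), (Nat.div_add_mod j (2 * k)).symm⟩
  rcases lt_or_ge q ε.len with hq | hq
  · rw [GPath.concat_toFun_of_le _ _ ((mul_add_lt_mul_iff hr).mpr hq).le, toGPath_toFun,
      toGPath_toFun, toGPathFun_mul_add hk _ (by simp; omega) hr.le,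
      toGPathFun_mul_add hk _ hq hr.le, concat_toFun_of_le _ _ hq.le,
      concat_toFun_of_le _ _ hq]
  obtain ⟨q, rfl⟩ := Nat.exists_eq_add_of_le hq
  rcases lt_or_ge q δ.len with hq' | hq'
  · have hj : 2 * k * (ε.len + q) + r = (ε.toGPath hk).len + (2 * k * q + r) := by simp; ring
    rw [hj, GPath.concat_toFun_add, ← hj, toGPath_toFun, toGPath_toFun,
      toGPathFun_mul_add hk _ (by simp; omega) hr.le, toGPathFun_mul_add hk _ hq' hr.le,
      Nat.add_assoc, concat_toFun_add, concat_toFun_add]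
  · have hlen : 2 * k * (ε.len + δ.len) ≤ 2 * k * (ε.len + q) + r :=
      (Nat.mul_le_mul_left _ (by omega)).trans (Nat.le_add_right _ _)
    rw [GPath.junk _ _ (by simpa using hlen), GPath.junk _ _ (by simp; nlinarith)]

end EPath

namespace GPath

def toEPath (hk : 1 ≤ k) (γ : GPath G v w) : EPath (closedKNbhdComplex G k) v w where
  len := γ.len
  toFun := γ.toFun
  source := γ.source
  target := γ.target
  edge i _ := ⟨Set.toFinite _, γ.toFun i, Set.insert_subset_iff.mpr
    ⟨γ.toFun_mem_closedKNbhd (by omega) (by omega),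
      Set.singleton_subset_iff.mpr (γ.toFun_mem_closedKNbhd (by omega) (by omega))⟩⟩
  junk := γ.junk

@[simp] theorem toEPath_len (hk : 1 ≤ k) (γ : GPath G v w) : (γ.toEPath hk).len = γ.len := rfl

theorem toEPath_concat (hk : 1 ≤ k) (γ : GPath G u v) (δ : GPath G v w) :
    (γ.concat δ).toEPath hk = (γ.toEPath hk).concat (δ.toEPath hk) := rfl

end GPath

end Subdivision

/-! ### Comparison -/

section Comparison

variable {V : Type*} {G : SimpleGraph V} {v w a b : V} {k : ℕ}

/-- A path of length at most `2k` lies in the closed `k`-neighborhood of its midpoint, all of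
whose finite subsets are simplices of `N^k[G]`. -/
theorem GPath.ehom_toEPath_of_len_le (hk : 1 ≤ k) {γ γ' : GPath G a b} (hγ : γ.len ≤ 2 * k)
    (hγ' : γ'.len ≤ 2 * k) : EHom _ (γ.toEPath hk) (γ'.toEPath hk) := by
  have hab : ({a, b} : Set V) ∈ closedKNbhdComplex G k := by
    have h : ({γ.toFun 0, γ.toFun γ.len} : Set V) ∈ closedKNbhdComplex G k :=
      mem_closedKNbhdComplex_of_subset (u := γ.toFun k) _ (Set.toFinite _)
      (by simp [Set.insert_subset_iff, γ.toFun_mem_closedKNbhd_of_len_le hγ])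
    rwa [γ.source, γ.target] at h
  exact (ehom_single_of_forall_mem mem_closedKNbhdComplex_of_subset hab _
    (γ.toFun_mem_closedKNbhd_of_len_le hγ)).trans
    (ehom_single_of_forall_mem mem_closedKNbhdComplex_of_subset hab _
      (γ'.toFun_mem_closedKNbhd_of_len_le hγ')).symm

theorem CEq.ehom_toEPath (hk : 1 ≤ k) {γ γ' : GPath G v w} (h : CEq (2 * k) γ γ') :
    EHom _ (γ.toEPath hk) (γ'.toEPath hk) := by
  refine Relation.EqvGen.map (GPath.toEPath hk) (fun γ γ' h => ?_) h
  obtain ⟨a, b, α, σ, σ', β, hσ, hσ', rfl, rfl⟩ :=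
    h.elim (fun h => h.shortSwap.mono (by omega)) RelB.shortSwap
  simp only [GPath.toEPath_concat]
  exact ((GPath.ehom_toEPath_of_len_le hk hσ hσ').concat_right _).concat_left _

/-- Telescoping: the subdivision of each edge `{x, y}` is `≃_{2k}` to a path `x → u → y`, and
consecutive detours `u → y → u` cancel. -/
theorem EPath.ceq_toGPath_of_forall_mem (hk : 1 ≤ k) {u : V}
    (σ : EPath (closedKNbhdComplex G k) a b) (hσ : ∀ i, σ.toFun i ∈ closedKNbhd G k u)
    (P : GPath G u a) (Q : GPath G u b) (hP : P.len ≤ k) (hQ : Q.len ≤ k) :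
    CEq (2 * k) (σ.toGPath hk) (P.reverse.concat Q) := by
  induction hn : σ.len generalizing a with
  | zero => exact ceq_of_len_le (by simp [hn]) (by simp; omega)
  | succ n ih =>
    obtain ⟨R, hR⟩ := exists_gpath_of_mem_closedKNbhd (hσ 1)
    have hsplit : σ.toGPath hk =
        ((σ.slice 0 1 (Nat.zero_le 1) (by omega) σ.source rfl).toGPath hk).concat
          ((σ.slice 1 σ.len (by omega) le_rfl rfl σ.target).toGPath hk) := by
      rw [← EPath.toGPath_concat, slice_concat_slice, slice_self]
    have hρ := ih (σ.slice 1 σ.len (by omega) le_rfl rfl σ.target) (fun i => hσ _) R hR.le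
      (by simp [hn])
    have hloop : CEq (2 * k) (R.concat R.reverse) (GPath.refl G u) :=
      ceq_of_len_le (by simp; omega) (by simp)
    rw [hsplit]
    refine ((ceq_of_len_le (δ := P.reverse.concat R) (by simp) (by simp; omega)).concat
      hρ).trans ?_
    rw [GPath.concat_assoc, ← GPath.concat_assoc R]
    simpa using (hloop.concat_right Q).concat_left P.reverse

theorem EHom.ceq_toGPath (hk : 1 ≤ k) {ε ε' : EPath (closedKNbhdComplex G k) v w}
    (h : EHom _ ε ε') : CEq (2 * k) (ε.toGPath hk) (ε'.toGPath hk) := by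
  refine Relation.EqvGen.map (EPath.toGPath hk) (fun ε ε' h => ?_) h
  obtain ⟨a, c, α, σ, σ', β, τ, ⟨-, u, hτ⟩, hσ, hσ', rfl, rfl⟩ := h.exists_split
  have ha : a ∈ τ := σ.source ▸ hσ 0
  have hc : c ∈ τ := σ.target ▸ hσ _
  obtain ⟨P, hP⟩ := exists_gpath_of_mem_closedKNbhd (hτ ha)
  obtain ⟨Q, hQ⟩ := exists_gpath_of_mem_closedKNbhd (hτ hc)
  simp only [EPath.toGPath_concat]
  exact (((σ.ceq_toGPath_of_forall_mem hk (fun i => hτ (hσ i)) P Q hP.le hQ.le).trans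
    (σ'.ceq_toGPath_of_forall_mem hk (fun i => hτ (hσ' i)) P Q hP.le hQ.le).symm).concat_right
      _).concat_left _

theorem EPath.ehom_toEPath_toGPath (hk : 1 ≤ k) (ε : EPath (closedKNbhdComplex G k) v w) :
    EHom _ ((ε.toGPath hk).toEPath hk) ε := by
  induction hn : ε.len generalizing v with
  | zero =>
    refine EHom.of_eq (EPath.ext (by simp [hn]) (funext fun j => ?_))
    exact ((ε.toGPath hk).junk j (by simp [hn])).trans (ε.junk j (by omega)).symm
  | succ n ih =>
    have hsplit : ε = (ε.slice 0 1 (Nat.zero_le 1) (by omega) ε.source rfl).concat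
        (ε.slice 1 ε.len (by omega) le_rfl rfl ε.target) := by
      rw [slice_concat_slice, slice_self]
    rw [hsplit, EPath.toGPath_concat, GPath.toEPath_concat]
    refine EHom.concat ?_ (ih _ (by simp [hn]))
    set s := ε.slice 0 1 (Nat.zero_le 1) (by omega) ε.source rfl
    have hmem := (s.toGPath hk).toFun_mem_closedKNbhd_of_len_le (k := k) (by simp [s])
    refine ehom_of_forall_mem mem_closedKNbhdComplex_of_subset hmem fun i => ?_
    rw [← s.toFun_min_len i, ← s.toGPathFun_mul hk (min_le_right _ _)]
    exact hmem _

theorem GPath.ceq_toGPath_toEPath (hk : 1 ≤ k) (γ : GPath G v w) :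
    CEq (2 * k) ((γ.toEPath hk).toGPath hk) γ := by
  induction hn : γ.len generalizing v with
  | zero => exact ceq_of_len_le (by simp [hn]) (by omega)
  | succ n ih =>
    have hsplit : γ = (γ.slice 0 1 (Nat.zero_le 1) γ.source rfl).concat
        (γ.slice 1 γ.len (by omega) rfl γ.target) := by
      rw [slice_concat_slice, slice_self]
    rw [hsplit, GPath.toEPath_concat, EPath.toGPath_concat]
    exact (ceq_of_len_le (by simp) (by simp; omega)).concat (ih _ (by simp [hn]))

end Comparison

/-- For a based simple graph `(G,v)` and `k ≥ 1`, the edge-path group `E(N^k[G], v)` of the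
closed `k`-neighborhood complex is isomorphic to the closed `2k`-fundamental group
`π₁^{2k}[G,v]`: there is a bijection between the set of edge-path homotopy classes of edge
loops at `v` in `N^k[G]` and the set of `≃_{2k}`-classes of loops of `G` at `v` which
respects concatenation (i.e. a group isomorphism for the concatenation-induced group
structures). -/
theorem edgePathGroup_closedKNbhdComplex_iso_closed2kFundamentalGroup
    {V : Type*} (G : SimpleGraph V) (v : V) (k : ℕ) (hk : 1 ≤ k) :
    ∃ Φ : Quot (EHom (closedKNbhdComplex G k) (v := v) (w := v)) ≃
          Quot (CEq (2 * k) (G := G) (v := v) (w := v)),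
      ∀ (a b : EPath (closedKNbhdComplex G k) v v) (x y : GPath G v v),
        Φ (Quot.mk _ a) = Quot.mk _ x → Φ (Quot.mk _ b) = Quot.mk _ y →
        Φ (Quot.mk _ (a.concat b)) = Quot.mk _ (x.concat y) := by
  have ceq_of_mk_eq {x y : GPath G v v} (h : Quot.mk (CEq (2 * k)) x = Quot.mk _ y) :
      CEq (2 * k) x y :=
    (Relation.EqvGen.is_equivalence _).eqvGen_iff.mp (Quot.eqvGen_exact h)
  refine ⟨⟨Quot.map (EPath.toGPath hk) (fun _ _ h => h.ceq_toGPath hk),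
    Quot.map (GPath.toEPath hk) (fun _ _ h => h.ehom_toEPath hk), ?_, ?_⟩, ?_⟩
  · rintro ⟨ε⟩
    exact Quot.sound (ε.ehom_toEPath_toGPath hk)
  · rintro ⟨γ⟩
    exact Quot.sound (γ.ceq_toGPath_toEPath hk)
  · intro a b x y ha hb
    refine Quot.sound ?_
    rw [EPath.toGPath_concat]
    exact (ceq_of_mk_eq ha).concat (ceq_of_mk_eq hb)
end
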